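/- Let a ≥ 2 be an integer, p ∈ [0,1], and let λ, ρ be degree distribution polynomials (nonnegative coefficients summing to 1) with ρ(0) = 0. Set y(x) = x + (1−x)(1 − λ(1 − p x)) and f(x) = y(x)·(1 − (1−y(x))^{a−1}(1 − ρ(y(x)^a))). Then for all x ∈ [0,1], f(x) ≤ (a−1)·y(x)² + ρ(y(x)^a), and consequently f(x) ≤ (a−1)(1 + pλ'(1))²x² + ρ(((1+pλ'(1))x)^a). -/
import Mathlib


noncomputable def degEval (c : ℕ → ℝ) (n : ℕ) (z : ℝ) : ℝ :=
  ∑ i ∈ Finset.range (n + 1), c i * z ^ i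

noncomputable def degMean (c : ℕ → ℝ) (n : ℕ) : ℝ :=
  ∑ i ∈ Finset.range (n + 1), (i : ℝ) * c i

noncomputable def yMap (lam : ℕ → ℝ) (nl : ℕ) (p x : ℝ) : ℝ :=
  x + (1 - x) * (1 - degEval lam nl (1 - p * x))

noncomputable def deMap (lam ρ : ℕ → ℝ) (nl nr a : ℕ) (p x : ℝ) : ℝ :=
  yMap lam nl p x *
    (1 - (1 - yMap lam nl p x) ^ (a - 1) * (1 - degEval ρ nr ((yMap lam nl p x) ^ a)))

lemma degEval_nonneg (c : ℕ → ℝ) (n : ℕ) (hc : ∀ i, 0 ≤ c i) {z : ℝ} (hz : 0 ≤ z) :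
    0 ≤ degEval c n z :=
  Finset.sum_nonneg fun i _ => mul_nonneg (hc i) (pow_nonneg hz i)

lemma degEval_mono (c : ℕ → ℝ) (n : ℕ) (hc : ∀ i, 0 ≤ c i) {z w : ℝ} (hz : 0 ≤ z)
    (hzw : z ≤ w) : degEval c n z ≤ degEval c n w :=
  Finset.sum_le_sum fun i _ => mul_le_mul_of_nonneg_left (pow_le_pow_left₀ hz hzw i) (hc i)

lemma degEval_le_one (c : ℕ → ℝ) (n : ℕ) (hc : ∀ i, 0 ≤ c i)
    (hsum : ∑ i ∈ Finset.range (n + 1), c i = 1) {z : ℝ} (hz : 0 ≤ z) (hz1 : z ≤ 1) :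
    degEval c n z ≤ 1 := by
  rw [← hsum]
  exact Finset.sum_le_sum fun i _ =>
    mul_le_of_le_one_right (hc i) (pow_le_one₀ hz hz1)

/-- `1 - λ(1-t) ≤ λ'(1)·t` for `t ∈ [0,1]`. -/
lemma one_sub_degEval_le (c : ℕ → ℝ) (n : ℕ) (hc : ∀ i, 0 ≤ c i)
    (hsum : ∑ i ∈ Finset.range (n + 1), c i = 1) {t : ℝ} (ht : 0 ≤ t) (ht1 : t ≤ 1) :
    1 - degEval c n (1 - t) ≤ degMean c n * t := by
  have h : ∀ i ∈ Finset.range (n + 1), c i - c i * (1 - t) ^ i ≤ (i : ℝ) * c i * t := by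
    intro i _
    have hb : 1 + (i : ℝ) * (-t) ≤ (1 + (-t)) ^ i := one_add_mul_le_pow (by linarith) i
    have h2 : 1 - (1 - t) ^ i ≤ (i : ℝ) * t := by
      have he : (1 + (-t)) = 1 - t := by ring
      rw [he] at hb; linarith
    nlinarith [hc i]
  calc 1 - degEval c n (1 - t)
      = ∑ i ∈ Finset.range (n + 1), (c i - c i * (1 - t) ^ i) := by
        rw [← hsum, degEval, ← Finset.sum_sub_distrib]
    _ ≤ ∑ i ∈ Finset.range (n + 1), (i : ℝ) * c i * t := Finset.sum_le_sum h
    _ = degMean c n * t := by rw [degMean, Finset.sum_mul]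

/-- the key bound behind the sufficient healing condition:
`f(x) ≤ (a−1)·y(x)² + ρ(y(x)^a)`, and consequently
`f(x) ≤ (a−1)(1+pλ'(1))²x² + ρ(((1+pλ'(1))x)^a)`. -/
theorem stmt11 (nl nr : ℕ) (lam ρ : ℕ → ℝ)
    (hlnn : ∀ i, 0 ≤ lam i) (hl0 : lam 0 = 0)
    (hlsum : ∑ i ∈ Finset.range (nl + 1), lam i = 1)
    (hrnn : ∀ i, 0 ≤ ρ i) (hr0 : ρ 0 = 0)
    (hrsum : ∑ i ∈ Finset.range (nr + 1), ρ i = 1)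
    (a : ℕ) (ha : 2 ≤ a) (p : ℝ) (hp : p ∈ Set.Icc (0 : ℝ) 1)
    (x : ℝ) (hx : x ∈ Set.Icc (0 : ℝ) 1) :
    deMap lam ρ nl nr a p x ≤
        ((a : ℝ) - 1) * (yMap lam nl p x) ^ 2 + degEval ρ nr ((yMap lam nl p x) ^ a) ∧
      deMap lam ρ nl nr a p x ≤
        ((a : ℝ) - 1) * (1 + p * degMean lam nl) ^ 2 * x ^ 2 +
          degEval ρ nr (((1 + p * degMean lam nl) * x) ^ a) := by
  obtain ⟨hp0, hp1⟩ := hp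
  obtain ⟨hx0, hx1⟩ := hx
  set y := yMap lam nl p x with hy
  have hpx0 : 0 ≤ p * x := mul_nonneg hp0 hx0
  have hpx1 : p * x ≤ 1 := mul_le_one₀ hp1 hx0 hx1
  have hL0 : 0 ≤ degEval lam nl (1 - p * x) := degEval_nonneg _ _ hlnn (by linarith)
  have hL1 : degEval lam nl (1 - p * x) ≤ 1 :=
    degEval_le_one _ _ hlnn hlsum (by linarith) (by linarith)
  have hy0 : 0 ≤ y := by
    rw [hy, yMap]; nlinarith
  have hy1 : y ≤ 1 := by
    rw [hy, yMap]; nlinarith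
  have hya0 : 0 ≤ y ^ a := pow_nonneg hy0 a
  have hya1 : y ^ a ≤ 1 := pow_le_one₀ hy0 hy1
  have hR0 : 0 ≤ degEval ρ nr (y ^ a) := degEval_nonneg _ _ hrnn hya0
  have hR1 : degEval ρ nr (y ^ a) ≤ 1 := degEval_le_one _ _ hrnn hrsum hya0 hya1
  have hcast : ((a - 1 : ℕ) : ℝ) = (a : ℝ) - 1 := by
    rw [Nat.cast_sub (by omega)]; norm_num
  have hbern : 1 - ((a : ℝ) - 1) * y ≤ (1 - y) ^ (a - 1) := by
    have h := one_add_mul_le_pow (a := -y) (by linarith) (a - 1)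
    rw [hcast] at h
    have he : (1 : ℝ) + -y = 1 - y := by ring
    rw [he] at h
    linarith
  have ha1 : (1 : ℝ) ≤ (a : ℝ) - 1 := by
    have h2 : (2 : ℝ) ≤ (a : ℝ) := by exact_mod_cast ha
    linarith
  have key1 : deMap lam ρ nl nr a p x ≤
      ((a : ℝ) - 1) * y ^ 2 + degEval ρ nr (y ^ a) := by
    rw [deMap, ← hy]
    have h1 : (1 - ((a : ℝ) - 1) * y) * (1 - degEval ρ nr (y ^ a)) ≤
        (1 - y) ^ (a - 1) * (1 - degEval ρ nr (y ^ a)) :=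
      mul_le_mul_of_nonneg_right hbern (by linarith)
    have h2 : 1 - (1 - y) ^ (a - 1) * (1 - degEval ρ nr (y ^ a)) ≤
        ((a : ℝ) - 1) * y + degEval ρ nr (y ^ a) := by
      nlinarith [h1, mul_nonneg (mul_nonneg (by linarith : (0:ℝ) ≤ (a : ℝ) - 1) hy0) hR0]
    nlinarith [mul_le_mul_of_nonneg_left h2 hy0]
  refine ⟨key1, ?_⟩
  have hm0 : 0 ≤ degMean lam nl :=
    Finset.sum_nonneg fun i _ => mul_nonneg (Nat.cast_nonneg i) (hlnn i)
  have hyle : y ≤ (1 + p * degMean lam nl) * x := by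
    have h := one_sub_degEval_le lam nl hlnn hlsum hpx0 hpx1
    rw [hy, yMap]
    nlinarith [mul_nonneg hm0 (mul_nonneg hp0 hx0)]
  have hR2 : degEval ρ nr (y ^ a) ≤ degEval ρ nr (((1 + p * degMean lam nl) * x) ^ a) :=
    degEval_mono _ _ hrnn hya0 (pow_le_pow_left₀ hy0 hyle a)
  have hsq : y ^ 2 ≤ ((1 + p * degMean lam nl) * x) ^ 2 := pow_le_pow_left₀ hy0 hyle 2
  calc deMap lam ρ nl nr a p x ≤ ((a : ℝ) - 1) * y ^ 2 + degEval ρ nr (y ^ a) := key1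
    _ ≤ ((a : ℝ) - 1) * (1 + p * degMean lam nl) ^ 2 * x ^ 2 +
        degEval ρ nr (((1 + p * degMean lam nl) * x) ^ a) := by
        have h := mul_le_mul_of_nonneg_left hsq (by linarith : (0:ℝ) ≤ (a : ℝ) - 1)
        rw [mul_pow] at h
        nlinarith [hR2]
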